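/- (Lower estimate of the inner-product sum, -1 < q < 0) Suppose -1 < q < 0 and set E(q) = (D(q)·C(|q|))^{-1} - (|q|/(1-|q|))·D(q)³·C(|q|)³. For all natural numbers r, s, r', s', k with r + s = r' + s' and r ≥ r', one has |∑_{i=0}^{r'} q^{(r-i)(r'-i) + k(r-i) + k(r'-i)}·[r']_q!·[s']_q!·binom(r,i)_q·binom(s,r'-i)_q| ≥ E(q)·|q|^{k(r-r')}·[r+s]_q!, where terms with i > r or r' - i > s vanish since the corresponding q-binomial coefficient is 0. -/

import Mathlib

/-- The q-integer `[n]_q = (1 - q^n)/(1 - q)`. -/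
noncomputable def qInt (q : ℝ) (n : ℕ) : ℝ := (1 - q ^ n) / (1 - q)

/-- The q-factorial `[n]_q! = [1]_q ⋯ [n]_q`, with `[0]_q! = 1`. -/
noncomputable def qFact (q : ℝ) : ℕ → ℝ
  | 0 => 1
  | n + 1 => qFact q n * qInt q (n + 1)

/-- The q-binomial coefficient `binom(n,m)_q`, with value `0` when `m > n`. -/
noncomputable def qBinom (q : ℝ) (n m : ℕ) : ℝ :=
  if m ≤ n then qFact q n / (qFact q m * qFact q (n - m)) else 0

/-- The constant `C(t) = ∏_{i=1}^∞ (1 - t^i)⁻¹` for `0 ≤ t < 1`. -/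
noncomputable def Cconst (t : ℝ) : ℝ := ∏' i : ℕ, (1 - t ^ (i + 1))⁻¹

/-- The constant `D(q) = ∏_{i=1}^∞ (1 + |q|^i)` for `-1 < q < 1`. -/
noncomputable def Dconst (q : ℝ) : ℝ := ∏' i : ℕ, (1 + |q| ^ (i + 1))

/-!
Write `[n]_q! = (q; q)_n / (1 - q)^n` with `(q; q)_n = ∏_{j=1}^n (1 - q^j)`. Each factor `1 - q^j`
lies between `1 - |q|^j` and `1 + |q|^j`, so for `m ≤ n` we have
`(q; q)_m ≤ (q; q)_n C(|q|)` and `(q; q)_n ≤ (q; q)_m D(q)`: the q-factorials in any summand can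
be traded for `[r+s]_q!` at the cost of a few factors `C` and `D`. The summand `i = r'` is then at
least `(D C)⁻¹ |q|^{k(r-r')} [r+s]_q!` in absolute value, every other summand at most
`D³ C² |q|^{k(r-r') + (r'-i)} [r+s]_q!`; the geometric tail sums to `|q|/(1-|q|)`, and the reverse
triangle inequality concludes.
-/

open Finset

/-- `(q; q)_n`. -/
noncomputable def qPochhammer (q : ℝ) (n : ℕ) : ℝ := ∏ j ∈ range n, (1 - q ^ (j + 1))

theorem Multipliable.prod_le_tprod_of_one_le {ι : Type*} {f : ι → ℝ} (hf : Multipliable f)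
    (h : ∀ i, 1 ≤ f i) (s : Finset ι) : ∏ i ∈ s, f i ≤ ∏' i, f i :=
  ge_of_tendsto hf.hasProd <| .filter_mono (SummationFilter.unconditional ι).le_atTop <|
    Filter.eventually_atTop.2 ⟨s, fun _ hst ↦ prod_le_prod_of_subset_of_one_le hst
      (fun i _ ↦ zero_le_one.trans (h i)) fun i _ _ ↦ h i⟩

section

variable {t : ℝ}

theorem multipliable_one_add_pow_succ (ht₀ : 0 ≤ t) (ht₁ : t < 1) :
    Multipliable fun i : ℕ ↦ 1 + t ^ (i + 1) :=
  Real.multipliable_one_add_of_summable <|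
    (summable_nat_add_iff 1).2 (summable_geometric_of_lt_one ht₀ ht₁)

theorem multipliable_inv_one_sub_pow_succ (ht₀ : 0 ≤ t) (ht₁ : t < 1) :
    Multipliable fun i : ℕ ↦ (1 - t ^ (i + 1))⁻¹ := by
  have hlog := Real.summable_log_one_add_of_summable
    ((summable_nat_add_iff 1).2 (summable_geometric_of_lt_one ht₀ ht₁)).neg
  refine Real.multipliable_of_summable_log
    (fun i ↦ inv_pos.2 (sub_pos.2 (pow_lt_one₀ ht₀ ht₁ i.succ_ne_zero))) ?_
  simpa [Real.log_inv, sub_eq_add_neg] using hlog.neg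

theorem sum_range_pow_sub_le (ht₀ : 0 ≤ t) (ht₁ : t < 1) (n : ℕ) :
    ∑ i ∈ range n, t ^ (n - i) ≤ t / (1 - t) :=
  calc ∑ i ∈ range n, t ^ (n - i) = ∑ i ∈ Ico 1 (n + 1), t ^ i := by
        rw [sum_Ico_eq_sum_range, Nat.add_sub_cancel, ← sum_range_reflect]
        exact sum_congr rfl fun j hj ↦ by rw [mem_range] at hj; congr 1; omega
    _ ≤ t / (1 - t) := by simpa using geom_sum_Ico_le_of_lt_one (m := 1) (n := n + 1) ht₀ ht₁

theorem one_le_Cconst (ht₀ : 0 ≤ t) (ht₁ : t < 1) : 1 ≤ Cconst t := by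
  simpa [Cconst] using (multipliable_inv_one_sub_pow_succ ht₀ ht₁).prod_le_tprod_of_one_le
    (fun i ↦ one_le_inv₀ (sub_pos.2 (pow_lt_one₀ ht₀ ht₁ i.succ_ne_zero)) |>.2
      (sub_le_self _ (pow_nonneg ht₀ _))) ∅

end

section

variable {q : ℝ}

theorem one_le_Dconst (hq : |q| < 1) : 1 ≤ Dconst q := by
  simpa [Dconst] using (multipliable_one_add_pow_succ (abs_nonneg q) hq).prod_le_tprod_of_one_le
    (fun i ↦ le_add_of_nonneg_right (pow_nonneg (abs_nonneg q) _)) ∅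

theorem one_sub_abs_pow_le_one_sub_pow (j : ℕ) : 1 - |q| ^ j ≤ 1 - q ^ j :=
  sub_le_sub_left ((le_abs_self _).trans (abs_pow q j).le) 1

theorem one_sub_pow_le_one_add_abs_pow (j : ℕ) : 1 - q ^ j ≤ 1 + |q| ^ j := by
  linarith [neg_abs_le (q ^ j), abs_pow q j]

theorem one_sub_pow_succ_pos (hq : |q| < 1) (j : ℕ) : 0 < 1 - q ^ (j + 1) :=
  (sub_pos.2 (pow_lt_one₀ (abs_nonneg q) hq j.succ_ne_zero)).trans_le
    (one_sub_abs_pow_le_one_sub_pow _)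

theorem prod_Ico_one_sub_pow_le_Dconst (hq : |q| < 1) (m n : ℕ) :
    ∏ j ∈ Ico m n, (1 - q ^ (j + 1)) ≤ Dconst q :=
  calc ∏ j ∈ Ico m n, (1 - q ^ (j + 1)) ≤ ∏ j ∈ Ico m n, (1 + |q| ^ (j + 1)) :=
        prod_le_prod (fun j _ ↦ (one_sub_pow_succ_pos hq j).le)
          fun _ _ ↦ one_sub_pow_le_one_add_abs_pow _
    _ ≤ Dconst q := (multipliable_one_add_pow_succ (abs_nonneg q) hq).prod_le_tprod_of_one_le
        (fun _ ↦ le_add_of_nonneg_right (pow_nonneg (abs_nonneg q) _)) _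

theorem prod_Ico_inv_one_sub_pow_le_Cconst (hq : |q| < 1) (m n : ℕ) :
    ∏ j ∈ Ico m n, (1 - q ^ (j + 1))⁻¹ ≤ Cconst |q| := by
  have hpos (j : ℕ) : 0 < 1 - |q| ^ (j + 1) :=
    sub_pos.2 (pow_lt_one₀ (abs_nonneg q) hq j.succ_ne_zero)
  calc ∏ j ∈ Ico m n, (1 - q ^ (j + 1))⁻¹ ≤ ∏ j ∈ Ico m n, (1 - |q| ^ (j + 1))⁻¹ :=
        prod_le_prod (fun j _ ↦ (inv_pos.2 (one_sub_pow_succ_pos hq j)).le)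
          fun j _ ↦ inv_anti₀ (hpos j) (one_sub_abs_pow_le_one_sub_pow _)
    _ ≤ Cconst |q| :=
        (multipliable_inv_one_sub_pow_succ (abs_nonneg q) hq).prod_le_tprod_of_one_le
        (fun i ↦ (one_le_inv₀ (hpos i)).2 (sub_le_self _ (pow_nonneg (abs_nonneg q) _))) _

theorem qPochhammer_pos (hq : |q| < 1) (n : ℕ) : 0 < qPochhammer q n :=
  prod_pos fun j _ ↦ one_sub_pow_succ_pos hq j

theorem qPochhammer_le_mul_Dconst (hq : |q| < 1) {m n : ℕ} (h : m ≤ n) :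
    qPochhammer q n ≤ qPochhammer q m * Dconst q := by
  rw [qPochhammer, qPochhammer, ← prod_range_mul_prod_Ico _ h]
  exact mul_le_mul_of_nonneg_left (prod_Ico_one_sub_pow_le_Dconst hq m n)
    (qPochhammer_pos hq m).le

theorem qPochhammer_le_mul_Cconst (hq : |q| < 1) {m n : ℕ} (h : m ≤ n) :
    qPochhammer q m ≤ qPochhammer q n * Cconst |q| := by
  have hsplit : qPochhammer q m = qPochhammer q n * ∏ j ∈ Ico m n, (1 - q ^ (j + 1))⁻¹ := by
    rw [qPochhammer, qPochhammer, ← prod_range_mul_prod_Ico _ h, prod_inv_distrib, mul_assoc,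
      mul_inv_cancel₀ (prod_pos fun j _ ↦ one_sub_pow_succ_pos hq j).ne', mul_one]
  rw [hsplit]
  exact mul_le_mul_of_nonneg_left (prod_Ico_inv_one_sub_pow_le_Cconst hq m n)
    (qPochhammer_pos hq n).le

theorem qFact_eq_qPochhammer_div (q : ℝ) (n : ℕ) :
    qFact q n = qPochhammer q n / (1 - q) ^ n := by
  induction n with
  | zero => simp [qFact, qPochhammer]
  | succ n ih =>
    rw [qFact, ih, qInt, qPochhammer, qPochhammer, prod_range_succ, div_mul_div_comm, ← pow_succ]

theorem qFact_pos (hq : |q| < 1) (n : ℕ) : 0 < qFact q n := by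
  rw [qFact_eq_qPochhammer_div]
  exact div_pos (qPochhammer_pos hq n) (pow_pos (by linarith [le_abs_self q]) n)

theorem qBinom_eq_qPochhammer (hq : |q| < 1) {n m : ℕ} (h : m ≤ n) :
    qBinom q n m = qPochhammer q n / (qPochhammer q m * qPochhammer q (n - m)) := by
  have h1q : (1 - q) ^ m * (1 - q) ^ (n - m) = (1 - q) ^ n := by
    rw [← pow_add, Nat.add_sub_cancel' h]
  have : 1 - q ≠ 0 := by linarith [le_abs_self q]
  have := (qPochhammer_pos hq m).ne'
  have := (qPochhammer_pos hq (n - m)).ne'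
  rw [qBinom, if_pos h, qFact_eq_qPochhammer_div, qFact_eq_qPochhammer_div,
    qFact_eq_qPochhammer_div, ← h1q]
  field_simp

theorem qBinom_nonneg (hq : |q| < 1) (n m : ℕ) : 0 ≤ qBinom q n m := by
  unfold qBinom
  split_ifs
  · exact div_nonneg (qFact_pos hq n).le (mul_pos (qFact_pos hq m) (qFact_pos hq _)).le
  · exact le_rfl

theorem qBinom_zero_right (hq : |q| < 1) (n : ℕ) : qBinom q n 0 = 1 := by
  simp [qBinom, qFact, (qFact_pos hq n).ne']

theorem inv_mul_qFact_add_le (hq : |q| < 1) {r s r' s' : ℕ} (hsum : r + s = r' + s')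
    (hr : r' ≤ r) :
    (Dconst q * Cconst |q|)⁻¹ * qFact q (r + s) ≤ qFact q r' * qFact q s' * qBinom q r r' := by
  have hP := qPochhammer_pos hq
  have hD : 0 < Dconst q := one_pos.trans_le (one_le_Dconst hq)
  have hC : 0 < Cconst |q| := one_pos.trans_le (one_le_Cconst (abs_nonneg q) hq)
  have h1q : 0 < 1 - q := by linarith [le_abs_self q]
  have hcore : qPochhammer q (r + s) * qPochhammer q (r - r') ≤
      Dconst q * Cconst |q| * (qPochhammer q r * qPochhammer q s') :=
    calc _ ≤ (qPochhammer q r * Dconst q) * (qPochhammer q s' * Cconst |q|) :=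
          mul_le_mul (qPochhammer_le_mul_Dconst hq (Nat.le_add_right r s))
            (qPochhammer_le_mul_Cconst hq (by omega)) (hP _).le (mul_pos (hP r) hD).le
      _ = _ := by ring
  have := (hP r').ne'
  rw [qFact_eq_qPochhammer_div, qFact_eq_qPochhammer_div, qFact_eq_qPochhammer_div,
    qBinom_eq_qPochhammer hq hr, show (1 - q) ^ (r + s) = (1 - q) ^ r' * (1 - q) ^ s' by
      rw [hsum, pow_add]]
  field_simp
  rw [le_div_iff₀ (hP _)]
  linarith

theorem qFact_mul_qFact_mul_qBinom_mul_qBinom_le (hq : |q| < 1) {r s r' s' i : ℕ}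
    (hsum : r + s = r' + s') (hi : i ≤ r') (hr : r' ≤ r) :
    qFact q r' * qFact q s' * qBinom q r i * qBinom q s (r' - i) ≤
      Dconst q ^ 3 * Cconst |q| ^ 2 * qFact q (r + s) := by
  have hP := qPochhammer_pos hq
  have hD : 0 < Dconst q := one_pos.trans_le (one_le_Dconst hq)
  have hC : 0 < Cconst |q| := one_pos.trans_le (one_le_Cconst (abs_nonneg q) hq)
  have h1q : 0 < 1 - q := by linarith [le_abs_self q]
  by_cases hj : r' - i ≤ s
  swap
  · rw [show qBinom q s (r' - i) = 0 from if_neg hj, mul_zero]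
    exact mul_nonneg (by positivity) (qFact_pos hq _).le
  set j := r' - i
  have hcore : qPochhammer q r' * qPochhammer q s' * qPochhammer q r * qPochhammer q s ≤
      Dconst q ^ 3 * Cconst |q| ^ 2 * qPochhammer q (r + s) *
        (qPochhammer q i * qPochhammer q (r - i) * qPochhammer q j * qPochhammer q (s - j)) := by
    have h₁ := qPochhammer_le_mul_Dconst hq hi
    have h₂ : qPochhammer q s' ≤ qPochhammer q (s - j) * Dconst q :=
      qPochhammer_le_mul_Dconst hq (by omega)
    have h₃ := qPochhammer_le_mul_Cconst hq (Nat.le_add_right r s)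
    have h₄ := qPochhammer_le_mul_Dconst hq hj
    have h₅ : 1 ≤ qPochhammer q (r - i) * Cconst |q| := by
      simpa [qPochhammer] using qPochhammer_le_mul_Cconst hq (Nat.zero_le (r - i))
    calc _ ≤ (qPochhammer q i * Dconst q) * (qPochhammer q (s - j) * Dconst q) *
          (qPochhammer q (r + s) * Cconst |q|) * (qPochhammer q j * Dconst q) *
          (qPochhammer q (r - i) * Cconst |q|) := by
          rw [← mul_one (_ * _ * _ * _)]
          gcongr
          all_goals repeat' apply mul_nonneg
          all_goals first | exact (hP _).le | exact hD.le | exact hC.le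
      _ = _ := by ring
  rw [qFact_eq_qPochhammer_div, qFact_eq_qPochhammer_div, qFact_eq_qPochhammer_div,
    qBinom_eq_qPochhammer hq (hi.trans hr), qBinom_eq_qPochhammer hq hj,
    show (1 - q) ^ (r + s) = (1 - q) ^ r' * (1 - q) ^ s' by rw [hsum, pow_add]]
  have := hP i
  have := hP (r - i)
  have := hP j
  have := hP (s - j)
  field_simp
  linarith

end

noncomputable def innerTerm (q : ℝ) (r s r' s' k i : ℕ) : ℝ :=
  q ^ ((r - i) * (r' - i) + k * (r - i) + k * (r' - i)) *
    qFact q r' * qFact q s' * qBinom q r i * qBinom q s (r' - i)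

section

variable {q : ℝ} {r s r' s' : ℕ}

theorem le_abs_innerTerm_self (hq : |q| < 1) (hsum : r + s = r' + s') (hr : r' ≤ r) (k : ℕ) :
    (Dconst q * Cconst |q|)⁻¹ * (|q| ^ (k * (r - r')) * qFact q (r + s)) ≤
      |innerTerm q r s r' s' k r'| := by
  have hT : 0 ≤ qFact q r' * qFact q s' * qBinom q r r' :=
    mul_nonneg (mul_pos (qFact_pos hq _) (qFact_pos hq _)).le (qBinom_nonneg hq _ _)
  have hterm : |innerTerm q r s r' s' k r'| =
      |q| ^ (k * (r - r')) * (qFact q r' * qFact q s' * qBinom q r r') := by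
    simp only [innerTerm, Nat.sub_self, mul_zero, zero_add, add_zero, qBinom_zero_right hq, mul_one]
    rw [mul_assoc, mul_assoc, ← mul_assoc (qFact q r'), abs_mul, abs_pow, abs_of_nonneg hT]
  rw [hterm, mul_left_comm]
  exact mul_le_mul_of_nonneg_left (inv_mul_qFact_add_le hq hsum hr) (by positivity)

theorem abs_innerTerm_le (hq : |q| < 1) (hsum : r + s = r' + s') (hr : r' ≤ r) (k : ℕ) {i : ℕ}
    (hi : i < r') :
    |innerTerm q r s r' s' k i| ≤
      Dconst q ^ 3 * Cconst |q| ^ 2 * (|q| ^ (k * (r - r')) * qFact q (r + s)) *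
        |q| ^ (r' - i) := by
  have hT : 0 ≤ qFact q r' * qFact q s' * qBinom q r i * qBinom q s (r' - i) :=
    mul_nonneg (mul_nonneg (mul_pos (qFact_pos hq _) (qFact_pos hq _)).le (qBinom_nonneg hq _ _))
      (qBinom_nonneg hq _ _)
  have hexp : k * (r - r') + (r' - i) ≤ (r - i) * (r' - i) + k * (r - i) + k * (r' - i) := by
    have : k * (r - r') ≤ k * (r - i) := Nat.mul_le_mul_left k (by omega)
    have : r' - i ≤ (r - i) * (r' - i) := Nat.le_mul_of_pos_left _ (by omega)
    omega
  calc |innerTerm q r s r' s' k i|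
      = |q| ^ ((r - i) * (r' - i) + k * (r - i) + k * (r' - i)) *
          (qFact q r' * qFact q s' * qBinom q r i * qBinom q s (r' - i)) := by
        rw [innerTerm, ← abs_of_nonneg hT, ← abs_pow, ← abs_mul]
        ring_nf
    _ ≤ (|q| ^ (k * (r - r')) * |q| ^ (r' - i)) *
          (Dconst q ^ 3 * Cconst |q| ^ 2 * qFact q (r + s)) :=
        mul_le_mul (by rw [← pow_add]; exact pow_le_pow_of_le_one (abs_nonneg q) hq.le hexp)
          (qFact_mul_qFact_mul_qBinom_mul_qBinom_le hq hsum hi.le hr) hT (by positivity)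
    _ = _ := by ring

theorem abs_sum_range_innerTerm_le (hq : |q| < 1) (hsum : r + s = r' + s') (hr : r' ≤ r)
    (k : ℕ) :
    |∑ i ∈ range r', innerTerm q r s r' s' k i| ≤
      |q| / (1 - |q|) * (Dconst q ^ 3 * Cconst |q| ^ 2) *
        (|q| ^ (k * (r - r')) * qFact q (r + s)) := by
  set M := |q| ^ (k * (r - r')) * qFact q (r + s)
  have hM : 0 ≤ M := mul_nonneg (by positivity) (qFact_pos hq _).le
  have hD : 0 ≤ Dconst q := zero_le_one.trans (one_le_Dconst hq)
  calc |∑ i ∈ range r', innerTerm q r s r' s' k i|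
      ≤ ∑ i ∈ range r', Dconst q ^ 3 * Cconst |q| ^ 2 * M * |q| ^ (r' - i) :=
        (abs_sum_le_sum_abs _ _).trans <| sum_le_sum fun i hi ↦
          abs_innerTerm_le hq hsum hr k (mem_range.1 hi)
    _ = Dconst q ^ 3 * Cconst |q| ^ 2 * M * ∑ i ∈ range r', |q| ^ (r' - i) := by
        rw [mul_sum]
    _ ≤ Dconst q ^ 3 * Cconst |q| ^ 2 * M * (|q| / (1 - |q|)) := by
        gcongr
        exact sum_range_pow_sub_le (abs_nonneg q) hq r'
    _ = _ := by ring

end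

/-- Lower estimate of the inner-product sum for `-1 < q < 0`,
with `E(q) = (D(q) C(|q|))⁻¹ - (|q|/(1-|q|)) D(q)³ C(|q|)³`. -/
theorem inner_sum_lower_neg (q : ℝ) (hq₁ : -1 < q) (hq₂ : q < 0)
    (r s r' s' k : ℕ) (hsum : r + s = r' + s') (hr : r' ≤ r) :
    ((Dconst q * Cconst |q|)⁻¹ - (|q| / (1 - |q|)) * (Dconst q ^ 3 * Cconst |q| ^ 3)) *
      |q| ^ (k * (r - r')) * qFact q (r + s) ≤
    |∑ i ∈ Finset.range (r' + 1),
      q ^ ((r - i) * (r' - i) + k * (r - i) + k * (r' - i)) *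
        qFact q r' * qFact q s' * qBinom q r i * qBinom q s (r' - i)| := by
  have hq : |q| < 1 := abs_lt.2 ⟨hq₁, by linarith⟩
  have hM : 0 ≤ |q| ^ (k * (r - r')) * qFact q (r + s) :=
    mul_nonneg (by positivity) (qFact_pos hq _).le
  have hD : 0 ≤ Dconst q := zero_le_one.trans (one_le_Dconst hq)
  have hC : 1 ≤ Cconst |q| := one_le_Cconst (abs_nonneg q) hq
  change _ ≤ |∑ i ∈ range (r' + 1), innerTerm q r s r' s' k i|
  rw [sum_range_succ]
  calc _ = (Dconst q * Cconst |q|)⁻¹ * (|q| ^ (k * (r - r')) * qFact q (r + s)) -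
        |q| / (1 - |q|) * (Dconst q ^ 3 * Cconst |q| ^ 3) *
          (|q| ^ (k * (r - r')) * qFact q (r + s)) := by ring
    _ ≤ (Dconst q * Cconst |q|)⁻¹ * (|q| ^ (k * (r - r')) * qFact q (r + s)) -
        |q| / (1 - |q|) * (Dconst q ^ 3 * Cconst |q| ^ 2) *
          (|q| ^ (k * (r - r')) * qFact q (r + s)) := by gcongr; norm_num
    _ ≤ |innerTerm q r s r' s' k r'| - |∑ i ∈ range r', innerTerm q r s r' s' k i| :=
        sub_le_sub (le_abs_innerTerm_self hq hsum hr k) (abs_sum_range_innerTerm_le hq hsum hr k)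
    _ ≤ _ := (abs_sub_abs_le_abs_add _ _).trans_eq (by rw [add_comm])
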